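/- The read-back map RB is sound for the rewriting system: for all L, R ∈ Λ^rb, if L → R then RB(L) β-reduces to RB(R) in at most one step (RB(L) ≡ RB(R) or RB(L) →β RB(R)). -/

import Mathlib

/-- Lambda terms, extended with "atoms" `⌈M⌉` that wrap a term. -/
inductive Tm : Type
  | var : String → Tm
  | app : Tm → Tm → Tm
  | lam : String → Tm → Tm
  | atom : Tm → Tm
deriving DecidableEq

namespace Tm

/-- A pure lambda term (an element of Λ): contains no atoms. -/
def Pure : Tm → Prop
  | var _ => True
  | app a b => Pure a ∧ Pure b
  | lam _ m => Pure m
  | atom _ => False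

/-- Free variables; atoms have no free variables. -/
def FV : Tm → Finset String
  | var x => {x}
  | app a b => FV a ∪ FV b
  | lam x m => FV m \ {x}
  | atom _ => ∅

/-- Substitution; atoms are unaffected. -/
def subst : Tm → String → Tm → Tm
  | var y, x, N => if y = x then N else var y
  | app a b, x, N => app (a.subst x N) (b.subst x N)
  | lam y m, x, N => if y = x then lam y m else lam y (m.subst x N)
  | atom m, _, _ => atom m

/-- `apps M [N₁,…,Nₙ] = M N₁ ⋯ Nₙ`. -/
def apps (M : Tm) (Ns : List Tm) : Tm := Ns.foldl app M

/-- Replace each free variable `x` (not in the bound list) by the atom `⌈x⌉`. -/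
def bulletAux : List String → Tm → Tm
  | bs, var x => if x ∈ bs then var x else atom (var x)
  | bs, app a b => app (bulletAux bs a) (bulletAux bs b)
  | bs, lam x m => lam x (bulletAux (x :: bs) m)
  | _, atom m => atom m

/-- `M•`: replace each free variable `x` of `M` by the atom `⌈x⌉`. -/
def bullet (M : Tm) : Tm := bulletAux [] M

/-- Read-back `RB : Λ• → Λ`: `RB (M N) = RB M (RB N)`,
`RB (λx.M) = λx.RB (M[x:=⌈x⌉])`, `RB ⌈M⌉ = M` (stated structurally,
which agrees with the above since `RB (M[x:=⌈x⌉]) = RB M` here). -/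
def RB : Tm → Tm
  | var x => var x
  | app a b => app (RB a) (RB b)
  | lam x m => lam x (RB m)
  | atom m => m

end Tm

/-- Membership in Λ• = { M• | M ∈ Λ }. -/
def IsBullet (M : Tm) : Prop := ∃ P : Tm, P.Pure ∧ M = P.bullet

/-- One-step β-reduction (atoms are inert). -/
inductive Beta : Tm → Tm → Prop
  | beta (x M N) : Beta (.app (.lam x M) N) (M.subst x N)
  | appL {M M'} (N) : Beta M M' → Beta (.app M N) (.app M' N)
  | appR (M) {N N'} : Beta N N' → Beta (.app M N) (.app M N')
  | lam (x) {M M'} : Beta M M' → Beta (.lam x M) (.lam x M')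

/-- β-normal form. -/
def NF (M : Tm) : Prop := ∀ N, ¬ Beta M N

/-- One-hole contexts. -/
inductive Ctx : Type
  | hole
  | appL : Ctx → Tm → Ctx
  | appR : Tm → Ctx → Ctx
  | lam : String → Ctx → Ctx

namespace Ctx

/-- `C[M]`: fill the hole of `C` with `M`. -/
def fill : Ctx → Tm → Tm
  | hole, M => M
  | appL C N, M => .app (C.fill M) N
  | appR N C, M => .app N (C.fill M)
  | lam x C, M => .lam x (C.fill M)

/-- Composition of contexts: `(C.comp D)[M] = C[D[M]]`. -/
def comp : Ctx → Ctx → Ctx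
  | hole, D => D
  | appL C N, D => appL (C.comp D) N
  | appR N C, D => appR N (C.comp D)
  | lam x C, D => lam x (C.comp D)

/-- A context over pure lambda terms. -/
def Pure : Ctx → Prop
  | hole => True
  | appL C N => C.Pure ∧ N.Pure
  | appR N C => N.Pure ∧ C.Pure
  | lam _ C => C.Pure

end Ctx

/-- A context is normal iff it maps β-normal forms to β-normal forms. -/
def NormalCtx (C : Ctx) : Prop := ∀ M, NF M → NF (C.fill M)

/-- The set Λ^rb: atoms `⌈M⌉`; pairs `⟨C[·], M⟩` with `M ∈ Λ•`
(applications `M ⃗N` with head in `Λ•` are encoded inside the `Tm`);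
and `⟨C[·], M ⃗N⟩` with `M ∈ Λ^rb`, `⃗N ∈ Λ•`. -/
inductive Rb : Type
  | atom : Tm → Rb
  | pair : Ctx → Tm → Rb
  | papp : Ctx → Rb → List Tm → Rb

namespace Rb

/-- Well-formedness: side conditions of membership in Λ^rb. -/
def WF : Rb → Prop
  | atom M => M.Pure
  | pair C M => C.Pure ∧ IsBullet M
  | papp C M Ns => C.Pure ∧ M.WF ∧ ∀ N ∈ Ns, IsBullet N

/-- Read-back on Λ^rb. -/
def rb : Rb → Tm
  | atom M => M
  | pair C M => C.fill M.RB
  | papp C M Ns => C.fill (Tm.apps M.rb (Ns.map Tm.RB))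

end Rb

/-- The reduction relation on Λ^rb (Definition 4 of the paper). -/
inductive Step : Rb → Rb → Prop
  | collapse (C M) : Step (.pair C (.atom M)) (.atom (C.fill M))
  | lam (C x M) :
      Step (.pair C (.lam x M))
        (.pair (C.comp (.lam x .hole)) (M.subst x (.atom (.var x))))
  | split (C M N₀ Ns) :
      Step (.pair C (Tm.apps (.atom M) (N₀ :: Ns)))
        (.papp C (.pair (.appR M .hole) N₀) Ns)
  | beta (C x M N₀ Ns) :
      Step (.pair C (Tm.apps (.lam x M) (N₀ :: Ns)))
        (.pair C (Tm.apps (M.subst x N₀) Ns))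
  | collapseNil (C M) : Step (.papp C (.atom M) []) (.atom (C.fill M))
  | splitCons (C M N₀ Ns) :
      Step (.papp C (.atom M) (N₀ :: Ns)) (.papp C (.pair (.appR M .hole) N₀) Ns)
  | cong (C Ns) {M M'} : Step M M' → Step (.papp C M Ns) (.papp C M' Ns)

/-- The steps of `Step` that contract a β-redex (rule 4, possibly under head congruence). -/
inductive BStep : Rb → Rb → Prop
  | beta (C x M N₀ Ns) :
      BStep (.pair C (Tm.apps (.lam x M) (N₀ :: Ns)))
        (.pair C (Tm.apps (M.subst x N₀) Ns))
  | cong (C Ns) {M M'} : BStep M M' → BStep (.papp C M Ns) (.papp C M' Ns)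

/-- Contraction of the leftmost β-redex. -/
inductive Leftmost : Tm → Tm → Prop
  | beta (x M N) : Leftmost (.app (.lam x M) N) (M.subst x N)
  | lam (x) {M M'} : Leftmost M M' → Leftmost (.lam x M) (.lam x M')
  | appL {M M'} (N) : (∀ x M₀, M ≠ Tm.lam x M₀) → Leftmost M M' →
      Leftmost (.app M N) (.app M' N)
  | appR (M) {N N'} : NF M → (∀ x M₀, M ≠ Tm.lam x M₀) → Leftmost N N' →
      Leftmost (.app M N) (.app M N')

/-!
Read-back forgets atoms, so every rule other than β is invisible to it: these rules only move
material between the context and the term, or unwrap an atom. Rule β contracts a head redex of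
the read-back. This works because read-back commutes with the substitution: the atoms of a term
in Λ• stand for its free variables, so a bound variable never occurs inside an atom.
-/

namespace Tm

lemma RB_apps (M : Tm) (Ns : List Tm) :
    RB (apps M Ns) = apps (RB M) (Ns.map RB) := by
  induction Ns generalizing M with
  | nil => rfl
  | cons N Ns ih => simpa only [apps, List.foldl, List.map, RB] using ih (app M N)

lemma RB_subst_atom_var (M : Tm) (x : String) :
    RB (M.subst x (atom (var x))) = RB M := by
  induction M with
  | var y => by_cases h : y = x <;> simp [subst, RB, h]
  | app a b iha ihb => simp [subst, RB, iha, ihb]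
  | lam y m ih => by_cases h : y = x <;> simp [subst, RB, h, ih]
  | atom m => rfl

lemma subst_eq_self_of_notMem_FV {M : Tm} {x : String} (N : Tm) (hx : x ∉ M.FV) :
    M.subst x N = M := by
  induction M with
  | var y =>
    have : y ≠ x := fun h => hx (by simp [FV, h])
    simp [subst, this]
  | app a b iha ihb =>
    simp only [FV, Finset.mem_union, not_or] at hx
    simp [subst, iha hx.1, ihb hx.2]
  | lam y m ih =>
    by_cases h : y = x
    · simp [subst, h]
    · have : x ∉ m.FV := fun hm => hx (by simp [FV, hm, Ne.symm h])
      simp [subst, h, ih this]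
  | atom m => rfl

/-- No atom of `M` has a free variable that lies in `bs` or is bound in `M` above the atom. -/
def AtomsFresh : List String → Tm → Prop
  | _, var _ => True
  | bs, app a b => AtomsFresh bs a ∧ AtomsFresh bs b
  | bs, lam y m => AtomsFresh (y :: bs) m
  | bs, atom m => ∀ y ∈ bs, y ∉ m.FV

lemma atomsFresh_bulletAux {P : Tm} (hP : P.Pure) (bs : List String) :
    AtomsFresh bs (bulletAux bs P) := by
  induction P generalizing bs with
  | var x =>
    by_cases h : x ∈ bs
    · simp [bulletAux, AtomsFresh, h]
    · simpa [bulletAux, AtomsFresh, FV, h] using fun y hy => ne_of_mem_of_not_mem hy h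
  | app a b iha ihb => exact ⟨iha hP.1 bs, ihb hP.2 bs⟩
  | lam y m ih => exact ih hP (y :: bs)
  | atom m _ => exact hP.elim

lemma AtomsFresh.of_apps {bs : List String} {M : Tm} {Ns : List Tm}
    (h : AtomsFresh bs (apps M Ns)) : AtomsFresh bs M := by
  induction Ns generalizing M with
  | nil => exact h
  | cons N Ns ih => exact (ih h).1

lemma RB_subst {M : Tm} {bs : List String} {x : String} (N : Tm)
    (hM : AtomsFresh bs M) (hx : x ∈ bs) :
    RB (M.subst x N) = (RB M).subst x (RB N) := by
  induction M generalizing bs with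
  | var y => by_cases h : y = x <;> simp [subst, RB, h]
  | app a b iha ihb => simp [subst, RB, iha hM.1 hx, ihb hM.2 hx]
  | lam y m ih =>
    by_cases h : y = x
    · simp [subst, RB, h]
    · simp [subst, RB, h, ih hM (List.mem_cons_of_mem y hx)]
  | atom m => simp [subst, RB, subst_eq_self_of_notMem_FV _ (hM x hx)]

end Tm

lemma IsBullet.RB_subst_of_apps_lam {x : String} {M N₀ : Tm} {Ns : List Tm}
    (h : IsBullet (Tm.apps (.lam x M) Ns)) :
    (M.subst x N₀).RB = M.RB.subst x N₀.RB := by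
  obtain ⟨P, hP, hPe⟩ := h
  have hfresh : Tm.AtomsFresh [] (Tm.apps (.lam x M) Ns) := hPe ▸ Tm.atomsFresh_bulletAux hP []
  exact Tm.RB_subst N₀ hfresh.of_apps (List.mem_singleton_self x)

lemma Ctx.comp_fill (C D : Ctx) (M : Tm) :
    (C.comp D).fill M = C.fill (D.fill M) := by
  induction C <;> simp [Ctx.comp, Ctx.fill, *]

lemma Beta.apps {M M' : Tm} (Ns : List Tm) (h : Beta M M') :
    Beta (Tm.apps M Ns) (Tm.apps M' Ns) := by
  induction Ns generalizing M M' with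
  | nil => exact h
  | cons N Ns ih => exact ih (Beta.appL N h)

lemma Beta.fill (C : Ctx) {M M' : Tm} (h : Beta M M') :
    Beta (C.fill M) (C.fill M') := by
  induction C with
  | hole => exact h
  | appL C N ih => exact Beta.appL N ih
  | appR N C ih => exact Beta.appR N ih
  | lam x C ih => exact Beta.lam x ih

/-- Soundness of read-back: `L → R` implies `RB L ≡ RB R` or `RB L →β RB R`. -/
theorem rb_sound (L R : Rb) (hL : L.WF) (h : Step L R) :
    L.rb = R.rb ∨ Beta L.rb R.rb := by
  induction h with
  | collapse | collapseNil => exact Or.inl rfl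
  | lam C x M =>
    left
    simp [Rb.rb, Tm.RB, Ctx.comp_fill, Ctx.fill, Tm.RB_subst_atom_var]
  | split C M N₀ Ns =>
    left
    simp only [Rb.rb, Tm.RB_apps, List.map, Tm.RB, Ctx.fill]
    rfl
  | splitCons C M N₀ Ns =>
    left
    simp [Rb.rb, Tm.apps, Ctx.fill]
  | beta C x M N₀ Ns =>
    right
    simp only [Rb.rb, Tm.RB_apps, List.map, Tm.RB, hL.2.RB_subst_of_apps_lam]
    exact Beta.fill C (Beta.apps _ (Beta.beta x M.RB N₀.RB))
  | cong C Ns _ ih =>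
    rcases ih hL.2.1 with he | hb
    · exact Or.inl (by simp only [Rb.rb, he])
    · exact Or.inr (Beta.fill C (Beta.apps _ hb))
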